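/- arXiv:2512.06936 — 5 statements merged into one kernel-verified Lean document; each statement's English description precedes it below -/
import Mathlib

section
/- (σ-division with remainder) Let q ∈ ℂ* not be a root of unity and let w, r be nonzero elements of the quantum torus A_q with deg_σ(w) ≤ deg_σ(r), where deg_σ denotes the difference between the highest and lowest σ-exponents appearing with nonzero coefficient when an element is written as a Laurent polynomial in σ over A = ℂ[z,z⁻¹]. Then there exist a nonzero g = g(z) ∈ A and h ∈ A_q such that either g·r − h·w = 0 or deg_σ(g·r − h·w) < deg_σ(w). -/
/-!
Conjugation by `σ^d` rescales `z` by `q^d`, so `σ^d w` has the σ-support of `w` shifted by `d`.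
Choose `d` so that `σ^d w` and `r` have the same lowest σ-exponent `lo`; since
`deg_σ w ≤ deg_σ r`, the σ-support of `σ^d w` then lies in `[lo, hi]`, the σ-range of `r`. With
`a`, `b` the Laurent coefficients of `σ^lo` in `σ^d w` and in `r`, the `σ^lo` terms of
`a r - b σ^d w` cancel because `ℂ[z,z⁻¹]` is commutative, so its σ-degree is below that of `r`.
Iterating until the σ-degree drops below that of `w` gives the division.
-/

open LaurentPolynomial

noncomputable section

/-- The `σ`-degree of an element of the quantum torus `A_q`, presented via its canonical
`ℂ`-basis `z^m σ^n` indexed by `ℤ × ℤ`: the difference between the largest and smallest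
`σ`-exponents occurring in `x` (defined to be `0` on `x = 0`). -/
def sigmaDeg {D : Type*} [Ring D] [Algebra ℂ D] (B : Module.Basis (ℤ × ℤ) ℂ D) (x : D) : ℤ :=
  (WithBot.unbotD 0 ((B.repr x).support.image Prod.snd).max) -
    (WithTop.untopD 0 ((B.repr x).support.image Prod.snd).min)

/-- The canonical embedding of `A = ℂ[z,z⁻¹]` into the quantum torus, `g(z) ↦ g(Z)`. -/
def embA {D : Type*} [Ring D] [Algebra ℂ D] (zd : Dˣ) (g : LaurentPolynomial ℂ) : D :=
  Finsupp.sum g.coeff fun n a => a • ((zd ^ n : Dˣ) : D)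

theorem zpow_mul_zpow_eq_of_mul_eq {G : Type*} [Group G] {Q s z : G} (hQ : ∀ g, Commute Q g)
    (h : s * z = Q * z * s) (j m : ℤ) : s ^ j * z ^ m = Q ^ (j * m) * z ^ m * s ^ j := by
  have hsz : SemiconjBy s (z ^ m) (Q ^ m * z ^ m) := by
    rw [← (hQ z).mul_zpow]
    exact SemiconjBy.zpow_right h m
  have hzs : SemiconjBy (z ^ m) s (Q ^ (-m) * s) := by
    rw [SemiconjBy, zpow_neg, mul_assoc, hsz.eq, ← mul_assoc, ← mul_assoc, inv_mul_cancel,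
      one_mul]
  have hzs' := (hzs.zpow_right j).eq
  rw [((hQ s).zpow_left (-m)).mul_zpow, ← zpow_mul] at hzs'
  rw [mul_assoc, hzs', ← mul_assoc, ← mul_assoc, ← zpow_add, show j * m + -m * j = 0 by ring,
    zpow_zero, one_mul]

namespace QuantumTorus

variable {D : Type*} [Ring D] [Algebra ℂ D]

def embHom (zd : Dˣ) : ℂ[T;T⁻¹] →ₐ[ℂ] D :=
  AddMonoidAlgebra.lift ℂ D ℤ ((Units.coeHom D).comp (zpowersHom Dˣ zd))

theorem embA_eq_embHom (zd : Dˣ) (g : ℂ[T;T⁻¹]) : embA zd g = embHom zd g := by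
  simp [embHom, AddMonoidAlgebra.lift_apply, embA]

theorem embHom_T (zd : Dˣ) (k : ℤ) : embHom zd (T k) = ((zd ^ k : Dˣ) : D) := by
  rw [T, embHom, AddMonoidAlgebra.lift_single]
  simp

section Support

variable (B : Module.Basis (ℤ × ℤ) ℂ D)

def sigmaSupport (x : D) : Finset ℤ := (B.repr x).support.image Prod.snd

theorem mem_sigmaSupport {x : D} {l : ℤ} : l ∈ sigmaSupport B x ↔ ∃ m, B.repr x (m, l) ≠ 0 := by
  simp [sigmaSupport]

theorem sigmaSupport_nonempty {x : D} (hx : x ≠ 0) : (sigmaSupport B x).Nonempty := by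
  simpa [sigmaSupport] using hx

theorem sigmaDeg_eq_max'_sub_min' {x : D} (hx : (sigmaSupport B x).Nonempty) :
    sigmaDeg B x = (sigmaSupport B x).max' hx - (sigmaSupport B x).min' hx := by
  rw [sigmaDeg, ← sigmaSupport, ← Finset.coe_max' hx, ← Finset.coe_min' hx]
  rfl

theorem sigmaDeg_nonneg (x : D) : 0 ≤ sigmaDeg B x := by
  by_cases hx : (sigmaSupport B x).Nonempty
  · rw [sigmaDeg_eq_max'_sub_min' B hx, sub_nonneg]
    exact Finset.min'_le_max' _ hx
  · rw [Finset.not_nonempty_iff_eq_empty, sigmaSupport] at hx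
    simp [sigmaDeg, hx]

theorem sigmaDeg_lt_of_sigmaSupport_subset_Ioc {x : D} (hx : x ≠ 0) {a b : ℤ}
    (h : sigmaSupport B x ⊆ Finset.Ioc a b) : sigmaDeg B x < b - a := by
  have hne := sigmaSupport_nonempty B hx
  have hmin := Finset.mem_Ioc.mp (h (Finset.min'_mem _ hne))
  have hmax := Finset.mem_Ioc.mp (h (Finset.max'_mem _ hne))
  rw [sigmaDeg_eq_max'_sub_min' B hne]
  omega

/-- The coefficient of `σ^l` in `x`, as a Laurent polynomial in `z`. -/
def slice (l : ℤ) : D →ₗ[ℂ] ℂ[T;T⁻¹] :=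
  (AddMonoidAlgebra.coeffLinearEquiv ℂ).symm.toLinearMap ∘ₗ
    Finsupp.lcomapDomain (fun m => (m, l)) (fun _ _ h => congrArg Prod.fst h) ∘ₗ B.repr.toLinearMap

theorem slice_coeff (l m : ℤ) (x : D) : (slice B l x).coeff m = B.repr x (m, l) := rfl

theorem slice_eq_zero_iff {l : ℤ} {x : D} : slice B l x = 0 ↔ l ∉ sigmaSupport B x := by
  rw [mem_sigmaSupport, ← AddMonoidAlgebra.coeff_eq_zero, Finsupp.ext_iff]
  simp [slice_coeff]

theorem slice_basis (l : ℤ) (p : ℤ × ℤ) : slice B l (B p) = if p.2 = l then T p.1 else 0 := by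
  ext m
  rw [slice_coeff, B.repr_self]
  split_ifs with hl
  · rw [T, AddMonoidAlgebra.coeff_single]
    simp [Finsupp.single_apply, Prod.ext_iff, hl]
  · simp [Prod.ext_iff, hl]

end Support

section Torus

variable {q : ℂ} {zd σd : Dˣ} {B : Module.Basis (ℤ × ℤ) ℂ D}

theorem ne_zero_of_mul_eq_smul [Nontrivial D]
    (hrel : (σd : D) * (zd : D) = q • ((zd : D) * (σd : D))) : q ≠ 0 := by
  rintro rfl
  exact (σd * zd).ne_zero (by rw [Units.val_mul, hrel, zero_smul])

theorem zpow_mul_zpow_eq_smul (hq0 : q ≠ 0)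
    (hrel : (σd : D) * (zd : D) = q • ((zd : D) * (σd : D))) (j m : ℤ) :
    ((σd ^ j : Dˣ) : D) * ((zd ^ m : Dˣ) : D) =
      q ^ (j * m) • (((zd ^ m : Dˣ) : D) * ((σd ^ j : Dˣ) : D)) := by
  let Q : Dˣ := Units.map (algebraMap ℂ D : ℂ →* D) (Units.mk0 q hq0)
  have hQ : ∀ g, Commute Q g := fun g => Units.ext (Algebra.commutes _ _)
  have h : σd * zd = Q * zd * σd :=
    Units.ext (by simpa [Q, Algebra.smul_def, mul_assoc] using hrel)
  have := congrArg Units.val (zpow_mul_zpow_eq_of_mul_eq hQ h j m)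
  simpa [Q, Algebra.smul_def, mul_assoc, ← map_zpow] using this

variable (hB : ∀ p : ℤ × ℤ, B p = ((zd ^ p.1 : Dˣ) : D) * ((σd ^ p.2 : Dˣ) : D))
include hB

theorem slice_embHom_mul (l : ℤ) (g : ℂ[T;T⁻¹]) (x : D) :
    slice B l (embHom zd g * x) = g * slice B l x := by
  induction g using LaurentPolynomial.induction_on' with
  | add g g' hg hg' => rw [map_add, add_mul, map_add, hg, hg', add_mul]
  | C_mul_T k a =>
    have hT : slice B l (((zd ^ k : Dˣ) : D) * x) = T k * slice B l x := by
      refine LinearMap.congr_fun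
        (B.ext (f₁ := slice B l ∘ₗ LinearMap.mulLeft ℂ ((zd ^ k : Dˣ) : D))
          (f₂ := LinearMap.mulLeft ℂ (T k) ∘ₗ slice B l) fun p => ?_) x
      have hzB : ((zd ^ k : Dˣ) : D) * B p = B (k + p.1, p.2) := by
        rw [hB, hB, ← mul_assoc, ← Units.val_mul, ← zpow_add]
      simp only [LinearMap.comp_apply, LinearMap.mulLeft_apply, hzB, slice_basis]
      split_ifs
      · exact T_add _ _
      · exact (mul_zero _).symm
    rw [← smul_eq_C_mul, map_smul, smul_mul_assoc, map_smul, embHom_T, hT, smul_mul_assoc]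

theorem repr_zpow_mul (hq0 : q ≠ 0)
    (hrel : (σd : D) * (zd : D) = q • ((zd : D) * (σd : D))) (d m n : ℤ) (x : D) :
    B.repr (((σd ^ d : Dˣ) : D) * x) (m, n + d) = q ^ (d * m) * B.repr x (m, n) := by
  refine LinearMap.congr_fun
    (B.ext (f₁ := B.coord (m, n + d) ∘ₗ LinearMap.mulLeft ℂ ((σd ^ d : Dˣ) : D))
      (f₂ := q ^ (d * m) • B.coord (m, n)) fun p => ?_) x
  have hσB : ((σd ^ d : Dˣ) : D) * B p = q ^ (d * p.1) • B (p.1, p.2 + d) := by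
    rw [hB, hB, ← mul_assoc, zpow_mul_zpow_eq_smul hq0 hrel, smul_mul_assoc, mul_assoc,
      ← Units.val_mul, ← zpow_add, add_comm d]
  simp only [LinearMap.comp_apply, LinearMap.mulLeft_apply, hσB, LinearMap.smul_apply,
    map_smul, Module.Basis.coord_apply, B.repr_self]
  obtain ⟨p₁, p₂⟩ := p
  by_cases hp : p₁ = m ∧ p₂ = n
  · obtain ⟨rfl, rfl⟩ := hp
    simp
  · simp [Prod.ext_iff, hp]

theorem mem_sigmaSupport_zpow_mul (hq0 : q ≠ 0)
    (hrel : (σd : D) * (zd : D) = q • ((zd : D) * (σd : D))) (d l : ℤ) (x : D) :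
    l ∈ sigmaSupport B (((σd ^ d : Dˣ) : D) * x) ↔ l - d ∈ sigmaSupport B x := by
  have hrepr m := repr_zpow_mul hB hq0 hrel d m (l - d) x
  simp only [sub_add_cancel] at hrepr
  simp [mem_sigmaSupport, hrepr, zpow_ne_zero _ hq0]

theorem sigmaSupport_sub_subset_Ioc {x y : D} {lo hi : ℤ}
    (hx : sigmaSupport B x ⊆ Finset.Icc lo hi) (hy : sigmaSupport B y ⊆ Finset.Icc lo hi) :
    sigmaSupport B (embHom zd (slice B lo y) * x - embHom zd (slice B lo x) * y) ⊆
      Finset.Ioc lo hi := by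
  intro l hl
  rw [← not_not (a := l ∈ _), ← slice_eq_zero_iff, map_sub, slice_embHom_mul hB,
    slice_embHom_mul hB] at hl
  have hx' := mt (@hx l)
  have hy' := mt (@hy l)
  rw [← slice_eq_zero_iff, Finset.mem_Icc] at hx' hy'
  rw [Finset.mem_Ioc]
  by_contra hout
  rcases eq_or_ne l lo with rfl | hne
  · exact hl (by rw [mul_comm, sub_self])
  · exact hl (by rw [hx' (by omega), hy' (by omega), mul_zero, mul_zero, sub_zero])

theorem exists_sigmaDeg_sub_lt_dividend (hq0 : q ≠ 0)
    (hrel : (σd : D) * (zd : D) = q • ((zd : D) * (σd : D))) {w r : D} (hw : w ≠ 0)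
    (hr : r ≠ 0) (hdeg : sigmaDeg B w ≤ sigmaDeg B r) :
    ∃ (g : ℂ[T;T⁻¹]) (h : D), g ≠ 0 ∧
      (embHom zd g * r - h * w = 0 ∨ sigmaDeg B (embHom zd g * r - h * w) < sigmaDeg B r) := by
  have hSw := sigmaSupport_nonempty B hw
  have hSr := sigmaSupport_nonempty B hr
  rw [sigmaDeg_eq_max'_sub_min' B hSw, sigmaDeg_eq_max'_sub_min' B hSr] at hdeg
  set lo := (sigmaSupport B r).min' hSr
  set hi := (sigmaSupport B r).max' hSr
  set d := lo - (sigmaSupport B w).min' hSw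
  set w' := ((σd ^ d : Dˣ) : D) * w
  have hlo : lo ∈ sigmaSupport B w' := by
    rw [mem_sigmaSupport_zpow_mul hB hq0 hrel, sub_sub_cancel]
    exact Finset.min'_mem _ _
  have hw' : sigmaSupport B w' ⊆ Finset.Icc lo hi := by
    intro l hl
    rw [mem_sigmaSupport_zpow_mul hB hq0 hrel] at hl
    have := Finset.min'_le _ _ hl
    have := Finset.le_max' _ _ hl
    rw [Finset.mem_Icc]
    omega
  have hr' : sigmaSupport B r ⊆ Finset.Icc lo hi := fun l hl =>
    Finset.mem_Icc.mpr ⟨Finset.min'_le _ _ hl, Finset.le_max' _ _ hl⟩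
  refine ⟨slice B lo w', embHom zd (slice B lo r) * ((σd ^ d : Dˣ) : D),
    (slice_eq_zero_iff B).not.mpr (not_not.mpr hlo), or_iff_not_imp_left.mpr fun hs => ?_⟩
  rw [sigmaDeg_eq_max'_sub_min' B hSr, mul_assoc]
  exact sigmaDeg_lt_of_sigmaSupport_subset_Ioc B (by rwa [← mul_assoc])
    (sigmaSupport_sub_subset_Ioc hB hr' hw')

theorem exists_sigmaDeg_sub_lt_divisor (hq0 : q ≠ 0)
    (hrel : (σd : D) * (zd : D) = q • ((zd : D) * (σd : D))) {w : D} (hw : w ≠ 0)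
    (r : D) (hr : r ≠ 0) (hdeg : sigmaDeg B w ≤ sigmaDeg B r) :
    ∃ (g : ℂ[T;T⁻¹]) (h : D), g ≠ 0 ∧
      (embHom zd g * r - h * w = 0 ∨ sigmaDeg B (embHom zd g * r - h * w) < sigmaDeg B w) := by
  obtain ⟨g, h, hg, hs⟩ := exists_sigmaDeg_sub_lt_dividend hB hq0 hrel hw hr hdeg
  by_cases hdone :
      embHom zd g * r - h * w = 0 ∨ sigmaDeg B (embHom zd g * r - h * w) < sigmaDeg B w
  · exact ⟨g, h, hg, hdone⟩
  push Not at hdone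
  have hlt := hs.resolve_left hdone.1
  obtain ⟨g', h', hg', hrec⟩ := exists_sigmaDeg_sub_lt_divisor hq0 hrel hw _ hdone.1 hdone.2
  refine ⟨g' * g, embHom zd g' * h + h', mul_ne_zero hg' hg, ?_⟩
  rwa [show embHom zd (g' * g) * r - (embHom zd g' * h + h') * w =
    embHom zd g' * (embHom zd g * r - h * w) - h' * w by rw [map_mul]; noncomm_ring]
termination_by (sigmaDeg B r).toNat
decreasing_by
  have := sigmaDeg_nonneg B (embHom zd g * r - h * w)
  omega

end Torus

end QuantumTorus

theorem stmt_5_general (q : ℂ)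
    (D : Type*) [Ring D] [Algebra ℂ D] (zd σd : Dˣ)
    (hrel : (σd : D) * (zd : D) = q • ((zd : D) * (σd : D)))
    (B : Module.Basis (ℤ × ℤ) ℂ D)
    (hB : ∀ p : ℤ × ℤ, B p = ((zd ^ p.1 : Dˣ) : D) * ((σd ^ p.2 : Dˣ) : D))
    (w r : D) (hw : w ≠ 0) (hr : r ≠ 0) (hdeg : sigmaDeg B w ≤ sigmaDeg B r) :
    ∃ (g : LaurentPolynomial ℂ) (h : D), g ≠ 0 ∧
      (embA zd g * r - h * w = 0 ∨ sigmaDeg B (embA zd g * r - h * w) < sigmaDeg B w) := by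
  have : Nontrivial D := ⟨⟨B (0, 0), 0, B.ne_zero _⟩⟩
  simp only [QuantumTorus.embA_eq_embHom]
  exact QuantumTorus.exists_sigmaDeg_sub_lt_divisor hB
    (QuantumTorus.ne_zero_of_mul_eq_smul hrel) hrel hw r hr hdeg

/-- σ-division with remainder.  Let `q ∈ ℂ*` not be a root of unity and let
`w, r` be nonzero elements of the quantum torus `A_q` (a `ℂ`-algebra with invertible elements
`z, σ` satisfying `σz = qzσ`, with `ℂ`-basis `z^m σ^n`, `(m,n) ∈ ℤ × ℤ`) with
`deg_σ(w) ≤ deg_σ(r)`.  Then there exist a nonzero `g = g(z) ∈ A = ℂ[z,z⁻¹]` and `h ∈ A_q`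
such that either `g·r − h·w = 0` or `deg_σ(g·r − h·w) < deg_σ(w)`. -/
theorem stmt_5 (q : ℂ) (hq : ∀ n : ℤ, n ≠ 0 → q ^ n ≠ 1)
    (D : Type*) [Ring D] [Algebra ℂ D] (zd σd : Dˣ)
    (hrel : (σd : D) * (zd : D) = q • ((zd : D) * (σd : D)))
    (B : Module.Basis (ℤ × ℤ) ℂ D)
    (hB : ∀ p : ℤ × ℤ, B p = ((zd ^ p.1 : Dˣ) : D) * ((σd ^ p.2 : Dˣ) : D))
    (w r : D) (hw : w ≠ 0) (hr : r ≠ 0) (hdeg : sigmaDeg B w ≤ sigmaDeg B r) :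
    ∃ (g : LaurentPolynomial ℂ) (h : D), g ≠ 0 ∧
      (embA zd g * r - h * w = 0 ∨ sigmaDeg B (embA zd g * r - h * w) < sigmaDeg B w) :=
  stmt_5_general q D zd σd hrel B hB w r hw hr hdeg

end
end

section
/- Let q ∈ ℂ* not be a root of unity and let M = A_q / (A_q·(σ−1)) ≅ O be the structure sheaf, with e the image of 1, and f = (1+z)e. Then the annihilator left ideal I = Ann(f) ⊆ A_q contains p = σ² − (q+1)σ + q and w = (z+1)σ − (qz+1), these satisfy the relation (qz+1)·p = (σ−q)·w in A_q, and I = A_q·p + A_q·w. -/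
/-!
Since `σ` acts trivially on `e`, the class of `x` in `D ⧸ D(σ - 1) ≅ K[T;T⁻¹]` is its image
under `z^m σ^n ↦ T^m`, so `x • f = 0` iff that image of `x (1 + z)` vanishes. Right division by
`p`, which is monic of degree two in `σ` with invertible constant term, writes every `x` as
`a(z) + b(z) σ` modulo `D p`. For such an element the annihilation condition reads
`a (1 + T) + b (1 + q T) = 0`; as `1 + T` and `1 + q T` are coprime for `q ≠ 1`, this forces
`a = -c (1 + q T)` and `b = c (1 + T)`, i.e. `a(z) + b(z) σ = c(z) w`.
-/

open LaurentPolynomial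

theorem Units.val_zpow_sub_one_mem_span_singleton {R : Type*} [Ring R] (u : Rˣ) (n : ℤ) :
    ((u ^ n : Rˣ) : R) - 1 ∈ Submodule.span R {(u : R) - 1} := by
  have hpow : ∀ k : ℕ, (u : R) ^ k - 1 ∈ Submodule.span R {(u : R) - 1} := fun k =>
    Submodule.mem_span_singleton.mpr ⟨_, geom_sum_mul (u : R) k⟩
  cases n with
  | ofNat k => simpa using hpow k
  | negSucc k =>
    have h : ((u ^ Int.negSucc k : Rˣ) : R) - 1
        = -((u ^ Int.negSucc k : Rˣ) : R) * ((u : R) ^ (k + 1) - 1) := by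
      rw [zpow_negSucc, neg_mul, mul_sub, mul_one, ← Units.val_pow_eq_pow_val, ← Units.val_mul,
        inv_mul_cancel, Units.val_one]
      abel
    rw [h]
    exact Submodule.smul_mem _ _ (hpow _)

theorem Int.induction_on_two_step {P : ℤ → Prop} (h0 : P 0) (h1 : P 1)
    (up : ∀ n, P n → P (n + 1) → P (n + 2)) (down : ∀ n, P (n + 1) → P (n + 2) → P n)
    (n : ℤ) : P n := by
  suffices h : ∀ n, P n ∧ P (n + 1) from (h n).1
  intro n
  induction n using Int.induction_on with
  | zero => exact ⟨h0, by simpa using h1⟩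
  | succ k ih => exact ⟨ih.2, by rw [add_assoc, one_add_one_eq_two]; exact up k ih.1 ih.2⟩
  | pred k ih =>
    have e1 : -(k : ℤ) - 1 + 1 = -k := by ring
    have e2 : -(k : ℤ) - 1 + 2 = -k + 1 := by ring
    exact ⟨down _ (by rw [e1]; exact ih.1) (by rw [e2]; exact ih.2), by rw [e1]; exact ih.1⟩

theorem IsCoprime.exists_eq_of_mul_add_mul_eq_zero {R : Type*} [CommRing R] {x y a b : R}
    (h : IsCoprime x y) (hab : a * x + b * y = 0) : ∃ c, a = -(c * y) ∧ b = c * x := by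
  obtain ⟨u, v, huv⟩ := h
  exact ⟨u * b - v * a, by linear_combination u * hab - a * huv,
    by linear_combination v * hab - b * huv⟩

theorem LaurentPolynomial.isCoprime_one_add_T_one_add_smul_T {K : Type*} [Field K] {q : K}
    (hq : q ≠ 1) : IsCoprime (1 + T 1 : K[T;T⁻¹]) (1 + q • T 1) := by
  have h : (1 + q • T 1 : K[T;T⁻¹]) = C (1 - q) * 1 + (1 + T 1) * C q := by
    rw [smul_eq_C_mul, map_sub, map_one]; ring
  rw [h, IsCoprime.add_mul_left_right_iff,
    isCoprime_mul_unit_left_right ((isUnit_iff_ne_zero.mpr (sub_ne_zero.mpr hq.symm)).map C)]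
  exact isCoprime_one_right

theorem pow_mul_eq_smul_mul_pow {K D : Type*} [CommSemiring K] [Semiring D] [Algebra K D]
    {q : K} {z σ : D} (hrel : σ * z = q • (z * σ)) (k : ℕ) :
    σ ^ k * z = q ^ k • (z * σ ^ k) := by
  induction k with
  | zero => simp
  | succ k ih =>
    rw [pow_succ, mul_assoc, hrel, mul_smul_comm, ← mul_assoc, ih, smul_mul_assoc, smul_smul,
      mul_assoc, ← pow_succ, ← pow_succ']

namespace QuantumTorus

variable {K D : Type*} [Field K] [Ring D] [Algebra K D]

noncomputable def ofLaurent (z : Dˣ) : K[T;T⁻¹] →ₐ[K] D :=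
  AddMonoidAlgebra.lift K D ℤ ((Units.coeHom D).comp (zpowersHom Dˣ z))

theorem ofLaurent_T (z : Dˣ) (m : ℤ) : ofLaurent z (T m : K[T;T⁻¹]) = ((z ^ m : Dˣ) : D) := by
  rw [ofLaurent, T, AddMonoidAlgebra.lift_single, one_smul]
  rfl

theorem ofLaurent_C_mul_T (z : Dˣ) (c : K) (m : ℤ) :
    ofLaurent z (C c * T m) = c • ((z ^ m : Dˣ) : D) := by
  rw [← smul_eq_C_mul, map_smul, ofLaurent_T]

def IsMonomialBasis (z σ : Dˣ) (B : Module.Basis (ℤ × ℤ) K D) : Prop :=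
  ∀ m n : ℤ, B (m, n) = ((z ^ m : Dˣ) : D) * ((σ ^ n : Dˣ) : D)

noncomputable def setSigmaOne (B : Module.Basis (ℤ × ℤ) K D) : D →ₗ[K] K[T;T⁻¹] :=
  B.constr K fun i => T i.1

theorem setSigmaOne_basis (B : Module.Basis (ℤ × ℤ) K D) (i : ℤ × ℤ) :
    setSigmaOne B (B i) = T i.1 :=
  B.constr_basis K _ i

section Monomial

variable {q : K} {z σ : Dˣ} {B : Module.Basis (ℤ × ℤ) K D}

theorem IsMonomialBasis.basis_zero (hB : IsMonomialBasis z σ B) (m : ℤ) :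
    B (m, 0) = ((z ^ m : Dˣ) : D) := by
  simp [hB m 0]

theorem IsMonomialBasis.basis_mul_sigma (hB : IsMonomialBasis z σ B) (m n : ℤ) :
    B (m, n) * σ = B (m, n + 1) := by
  rw [hB, hB, mul_assoc, ← Units.val_mul, ← zpow_add_one]

theorem setSigmaOne_mul_sigma (hB : IsMonomialBasis z σ B) (x : D) :
    setSigmaOne B (x * σ) = setSigmaOne B x := by
  have h : setSigmaOne B ∘ₗ LinearMap.mulRight K (σ : D) = setSigmaOne B :=
    B.ext fun ⟨m, n⟩ => by simp [hB.basis_mul_sigma, setSigmaOne_basis]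
  exact LinearMap.congr_fun h x

theorem sub_ofLaurent_setSigmaOne_mem_span (hB : IsMonomialBasis z σ B) (x : D) :
    x - ofLaurent z (setSigmaOne B x) ∈ Submodule.span D {(σ : D) - 1} := by
  let L : D →ₗ[K] D := LinearMap.id - (ofLaurent z).toLinearMap ∘ₗ setSigmaOne B
  suffices h : ⊤ ≤ ((Submodule.span D {(σ : D) - 1}).restrictScalars K).comap L from h trivial
  rw [← B.span_eq, Submodule.span_le]
  rintro _ ⟨⟨m, n⟩, rfl⟩
  have h : L (B (m, n)) = ((z ^ m : Dˣ) : D) * (((σ ^ n : Dˣ) : D) - 1) := by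
    simp only [L, LinearMap.sub_apply, LinearMap.id_apply, LinearMap.comp_apply,
      AlgHom.toLinearMap_apply, setSigmaOne_basis, ofLaurent_T]
    rw [hB m n, mul_sub, mul_one]
  rw [SetLike.mem_coe, Submodule.mem_comap, h, Submodule.restrictScalars_mem]
  exact Submodule.smul_mem _ _ (Units.val_zpow_sub_one_mem_span_singleton σ n)

theorem mem_span_sigma_sub_one_iff (hB : IsMonomialBasis z σ B) (x : D) :
    x ∈ Submodule.span D {(σ : D) - 1} ↔ setSigmaOne B x = 0 := by
  refine ⟨fun hx => ?_, fun hx => by simpa [hx] using sub_ofLaurent_setSigmaOne_mem_span hB x⟩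
  obtain ⟨d, rfl⟩ := Submodule.mem_span_singleton.mp hx
  rw [smul_eq_mul, mul_sub, mul_one, map_sub, setSigmaOne_mul_sigma hB, sub_self]

theorem smul_mk_eq_zero_iff (hB : IsMonomialBasis z σ B) (x y : D) :
    x • (Submodule.Quotient.mk y : D ⧸ Submodule.span D {(σ : D) - 1}) = 0 ↔
      setSigmaOne B (x * y) = 0 := by
  rw [← Submodule.Quotient.mk_smul, smul_eq_mul, Submodule.Quotient.mk_eq_zero,
    mem_span_sigma_sub_one_iff hB]

theorem exists_sub_mem_span_quadratic (hB : IsMonomialBasis z σ B) {c₁ c₀ : K} (hc₀ : c₀ ≠ 0)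
    (x : D) : ∃ a b : K[T;T⁻¹], x - (ofLaurent z a + ofLaurent z b * σ) ∈
      Submodule.span D {(σ : D) ^ 2 + c₁ • (σ : D) + c₀ • 1} := by
  set p : D := (σ : D) ^ 2 + c₁ • (σ : D) + c₀ • 1
  let S : Submodule K D := LinearMap.range (ofLaurent z).toLinearMap ⊔
      LinearMap.range (LinearMap.mulRight K (σ : D) ∘ₗ (ofLaurent z).toLinearMap) ⊔
      (Submodule.span D {p}).restrictScalars K
  have hmul (m n : ℤ) : B (m, n) * p ∈ S :=
    Submodule.mem_sup_right (Submodule.smul_mem _ (B (m, n)) (Submodule.mem_span_singleton_self p))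
  have hBp (m n : ℤ) : B (m, n) * p = B (m, n + 2) + c₁ • B (m, n + 1) + c₀ • B (m, n) := by
    rw [mul_add, mul_add, mul_smul_comm, mul_smul_comm, mul_one, pow_two, ← mul_assoc,
      hB.basis_mul_sigma, hB.basis_mul_sigma, add_assoc n, one_add_one_eq_two]
  have hbasis (m n : ℤ) : B (m, n) ∈ S := by
    induction n using Int.induction_on_two_step with
    | h0 => exact Submodule.mem_sup_left (Submodule.mem_sup_left
        ⟨T m, by simp [ofLaurent_T, hB.basis_zero]⟩)
    | h1 => exact Submodule.mem_sup_left (Submodule.mem_sup_right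
        ⟨T m, by simp [ofLaurent_T, ← hB.basis_zero, hB.basis_mul_sigma]⟩)
    | up n h₀ h₁ =>
      rw [show B (m, n + 2) = B (m, n) * p - c₁ • B (m, n + 1) - c₀ • B (m, n) by
        rw [hBp]; abel]
      exact S.sub_mem (S.sub_mem (hmul m n) (S.smul_mem _ h₁)) (S.smul_mem _ h₀)
    | down n h₁ h₂ =>
      have h : c₀ • B (m, n) ∈ S := by
        rw [show c₀ • B (m, n) = B (m, n) * p - B (m, n + 2) - c₁ • B (m, n + 1) by
          rw [hBp]; abel]
        exact S.sub_mem (S.sub_mem (hmul m n) h₂) (S.smul_mem _ h₁)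
      simpa [hc₀] using S.smul_mem c₀⁻¹ h
  have hx : x ∈ S := by
    have h : Submodule.span K (Set.range B) ≤ S :=
      Submodule.span_le.mpr (by rintro _ ⟨⟨m, n⟩, rfl⟩; exact hbasis m n)
    exact h (B.span_eq ▸ Submodule.mem_top)
  obtain ⟨y, hy, s, hs, rfl⟩ := Submodule.mem_sup.mp hx
  obtain ⟨_, ⟨a, rfl⟩, _, ⟨b, rfl⟩, rfl⟩ := Submodule.mem_sup.mp hy
  exact ⟨a, b, by simpa using hs⟩

theorem zpow_mul_eq_smul_mul_zpow (hq : q ≠ 0) (hrel : (σ : D) * z = q • ((z : D) * σ))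
    (n : ℤ) : ((σ ^ n : Dˣ) : D) * z = q ^ n • ((z : D) * (σ ^ n : Dˣ)) := by
  have hinv : ((σ⁻¹ : Dˣ) : D) * z = q⁻¹ • ((z : D) * (σ⁻¹ : Dˣ)) := by
    have h : (z : D) * (σ⁻¹ : Dˣ) = q • (((σ⁻¹ : Dˣ) : D) * z) := by
      calc (z : D) * (σ⁻¹ : Dˣ) = (σ⁻¹ : Dˣ) * ((σ : D) * z) * (σ⁻¹ : Dˣ) := by
            simp [← mul_assoc]
        _ = q • (((σ⁻¹ : Dˣ) : D) * z) := by
            rw [hrel, mul_smul_comm, smul_mul_assoc]; simp [mul_assoc]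
    rw [h, smul_smul, inv_mul_cancel₀ hq, one_smul]
  cases n with
  | ofNat k => simpa using pow_mul_eq_smul_mul_pow hrel k
  | negSucc k => simpa [zpow_negSucc] using pow_mul_eq_smul_mul_pow hinv (k + 1)

theorem IsMonomialBasis.basis_mul_z (hq : q ≠ 0) (hrel : (σ : D) * z = q • ((z : D) * σ))
    (hB : IsMonomialBasis z σ B) (m n : ℤ) : B (m, n) * z = q ^ n • B (m + 1, n) := by
  rw [hB, hB, mul_assoc, zpow_mul_eq_smul_mul_zpow hq hrel, mul_smul_comm, ← mul_assoc,
    ← Units.val_mul, ← zpow_add_one]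

theorem setSigmaOne_ofLaurent_mul_zpow_mul_one_add (hq : q ≠ 0)
    (hrel : (σ : D) * z = q • ((z : D) * σ)) (hB : IsMonomialBasis z σ B) (a : K[T;T⁻¹])
    (n : ℤ) :
    setSigmaOne B (ofLaurent z a * ((σ ^ n : Dˣ) : D) * (1 + z)) = a * (1 + q ^ n • T 1) := by
  induction a using LaurentPolynomial.induction_on' with
  | add a b ha hb => rw [map_add, add_mul, add_mul, map_add, ha, hb, add_mul]
  | C_mul_T m c =>
    rw [ofLaurent_C_mul_T, smul_mul_assoc, smul_mul_assoc, ← hB, mul_add, mul_one,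
      hB.basis_mul_z hq hrel, map_smul, map_add, map_smul, setSigmaOne_basis, setSigmaOne_basis,
      T_add]
    simp only [smul_eq_C_mul]
    ring

theorem setSigmaOne_ofLaurent_add_mul_sigma_mul_one_add (hq : q ≠ 0)
    (hrel : (σ : D) * z = q • ((z : D) * σ)) (hB : IsMonomialBasis z σ B) (a b : K[T;T⁻¹]) :
    setSigmaOne B ((ofLaurent z a + ofLaurent z b * σ) * (1 + z)) =
      a * (1 + T 1) + b * (1 + q • T 1) := by
  have h := setSigmaOne_ofLaurent_mul_zpow_mul_one_add hq hrel hB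
  simpa [add_mul] using congrArg₂ (· + ·) (h a 0) (h b 1)

theorem setSigmaOne_quadratic_mul_one_add (hq : q ≠ 0)
    (hrel : (σ : D) * z = q • ((z : D) * σ)) (hB : IsMonomialBasis z σ B) :
    setSigmaOne B (((σ : D) ^ 2 - (q + 1) • (σ : D) + q • 1) * (1 + z)) = 0 := by
  have h (n : ℤ) : setSigmaOne B (((σ ^ n : Dˣ) : D) * (1 + z)) = 1 + q ^ n • T 1 := by
    simpa using setSigmaOne_ofLaurent_mul_zpow_mul_one_add hq hrel hB 1 n
  have e : ((σ : D) ^ 2 - (q + 1) • (σ : D) + q • 1) * (1 + z) =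
      ((σ ^ (2 : ℤ) : Dˣ) : D) * (1 + z) - (q + 1) • (((σ ^ (1 : ℤ) : Dˣ) : D) * (1 + z)) +
        q • (((σ ^ (0 : ℤ) : Dˣ) : D) * (1 + z)) := by
    simp only [zpow_ofNat, Units.val_pow_eq_pow_val, pow_one, pow_zero, Units.val_one, one_mul,
      sub_mul, add_mul, smul_mul_assoc]
  rw [e, map_add, map_sub, map_smul, map_smul, h, h, h]
  simp only [smul_eq_C_mul, zpow_ofNat, pow_one, pow_zero, map_add, map_pow, map_one]
  ring

theorem setSigmaOne_w_mul_one_add (hq : q ≠ 0)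
    (hrel : (σ : D) * z = q • ((z : D) * σ)) (hB : IsMonomialBasis z σ B) :
    setSigmaOne B ((((z : D) + 1) * σ - (q • (z : D) + 1)) * (1 + z)) = 0 := by
  have e1 : ((z : D) + 1) * σ = ofLaurent z (T 1 + 1 : K[T;T⁻¹]) * ((σ ^ (1 : ℤ) : Dˣ) : D) := by
    simp [ofLaurent_T]
  have e0 : q • (z : D) + 1 = ofLaurent z (q • T 1 + 1 : K[T;T⁻¹]) * ((σ ^ (0 : ℤ) : Dˣ) : D) := by
    simp [ofLaurent_T]
  rw [sub_mul, e1, e0, map_sub, setSigmaOne_ofLaurent_mul_zpow_mul_one_add hq hrel hB,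
    setSigmaOne_ofLaurent_mul_zpow_mul_one_add hq hrel hB]
  simp only [smul_eq_C_mul, zpow_one, zpow_zero, map_one]
  ring

theorem smul_z_add_one_mul_quadratic_eq (hrel : (σ : D) * z = q • ((z : D) * σ)) :
    (q • (z : D) + 1) * ((σ : D) ^ 2 - (q + 1) • (σ : D) + q • 1) =
      ((σ : D) - q • 1) * (((z : D) + 1) * σ - (q • (z : D) + 1)) := by
  have h2 : (σ : D) * ((z : D) * σ) = q • ((z : D) * (σ * σ)) := by
    rw [← mul_assoc, hrel, smul_mul_assoc, mul_assoc]
  simp only [mul_add, add_mul, mul_sub, sub_mul, smul_mul_assoc, mul_smul_comm, mul_one,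
    one_mul, pow_two]
  rw [h2, hrel]
  module

theorem ofLaurent_add_ofLaurent_mul_mem_span (hq : q ≠ 1) {a b : K[T;T⁻¹]}
    (hab : a * (1 + T 1) + b * (1 + q • T 1) = 0) :
    ofLaurent z a + ofLaurent z b * σ ∈
      Submodule.span D {((z : D) + 1) * σ - (q • (z : D) + 1)} := by
  obtain ⟨c, rfl, rfl⟩ :=
    (isCoprime_one_add_T_one_add_smul_T hq).exists_eq_of_mul_add_mul_eq_zero hab
  refine Submodule.mem_span_singleton.mpr ⟨ofLaurent z c, ?_⟩
  simp only [map_neg, map_mul, map_add, map_smul, ofLaurent_T, zpow_one, smul_eq_mul,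
    mul_sub, mul_add, add_mul, one_mul, mul_one, mul_assoc]
  abel

end Monomial

end QuantumTorus

open QuantumTorus in
/-- Let `q ∈ ℂ*` not be a root of unity, let `A_q` be the quantum torus
(a `ℂ`-algebra with invertible `z, σ` satisfying `σz = qzσ` and `ℂ`-basis `z^m σ^n`), and let
`M = A_q/(A_q·(σ−1)) ≅ O` with `e` the image of `1` and `f = (1+z)e`.  Then the annihilator
left ideal `I = Ann(f)` contains `p = σ² − (q+1)σ + q` and `w = (z+1)σ − (qz+1)`, these satisfy
`(qz+1)·p = (σ−q)·w` in `A_q`, and `I = A_q·p + A_q·w`. -/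
theorem stmt_7 (q : ℂ) (hq : ∀ n : ℤ, n ≠ 0 → q ^ n ≠ 1)
    (D : Type*) [Ring D] [Algebra ℂ D] (zd σd : Dˣ)
    (hrel : (σd : D) * (zd : D) = q • ((zd : D) * (σd : D)))
    (B : Module.Basis (ℤ × ℤ) ℂ D)
    (hB : ∀ p : ℤ × ℤ, B p = ((zd ^ p.1 : Dˣ) : D) * ((σd ^ p.2 : Dˣ) : D)) :
    let J : Submodule D D := Submodule.span D {(σd : D) - 1}
    let e : D ⧸ J := Submodule.Quotient.mk 1
    let f : D ⧸ J := ((1 : D) + (zd : D)) • e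
    let p : D := (σd : D) ^ 2 - (q + 1) • (σd : D) + q • (1 : D)
    let w : D := ((zd : D) + 1) * (σd : D) - (q • (zd : D) + 1)
    p • f = 0 ∧ w • f = 0 ∧
      (q • (zd : D) + 1) * p = ((σd : D) - q • (1 : D)) * w ∧
      ∀ x : D, x • f = 0 ↔ x ∈ Submodule.span D ({p, w} : Set D) := by
  intro J e f p w
  have hB : IsMonomialBasis zd σd B := fun m n => hB (m, n)
  have : Nontrivial D := nontrivial_of_ne (B (0, 0)) 0 (B.ne_zero _)
  have hq0 : q ≠ 0 := fun h => (σd * zd).ne_zero (by rw [Units.val_mul, hrel, h, zero_smul])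
  have hq1 : q ≠ 1 := by simpa using hq 1 one_ne_zero
  have hann (x : D) : x • f = 0 ↔ setSigmaOne B (x * (1 + zd)) = 0 := by
    rw [← smul_mk_eq_zero_iff hB, ← mul_one (1 + (zd : D))]
    rfl
  have hpf : p • f = 0 := (hann p).mpr (setSigmaOne_quadratic_mul_one_add hq0 hrel hB)
  have hwf : w • f = 0 := (hann w).mpr (setSigmaOne_w_mul_one_add hq0 hrel hB)
  have hspan : Submodule.span D {p, w} ≤ LinearMap.ker (LinearMap.toSpanSingleton D _ f) :=
    Submodule.span_le.mpr (by rintro _ (rfl | rfl) <;> assumption)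
  refine ⟨hpf, hwf, smul_z_add_one_mul_quadratic_eq hrel, fun x =>
    ⟨fun hx => ?_, fun hx => hspan hx⟩⟩
  obtain ⟨a, b, hs⟩ := exists_sub_mem_span_quadratic hB (c₁ := -(q + 1)) hq0 x
  rw [neg_smul, ← sub_eq_add_neg] at hs
  have hp : x - (ofLaurent zd a + ofLaurent zd b * σd) ∈ Submodule.span D {p, w} :=
    Submodule.span_mono (Set.singleton_subset_iff.mpr (Set.mem_insert _ _)) hs
  have hab : a * (1 + T 1) + b * (1 + q • T 1) = 0 := by
    have h := LinearMap.mem_ker.mp (hspan hp)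
    rw [LinearMap.toSpanSingleton_apply, sub_smul, hx, zero_sub, neg_eq_zero] at h
    rwa [hann, setSigmaOne_ofLaurent_add_mul_sigma_mul_one_add hq0 hrel hB] at h
  have hw : ofLaurent zd a + ofLaurent zd b * σd ∈ Submodule.span D {p, w} :=
    Submodule.span_mono
      (Set.singleton_subset_iff.mpr (Set.mem_insert_of_mem _ (Set.mem_singleton _)))
      (ofLaurent_add_ofLaurent_mul_mem_span hq1 hab)
  simpa only [sub_add_cancel] using Submodule.add_mem _ hp hw
end

section
/- Let q ∈ ℂ* not be a root of unity and let M be an A_q-module finitely generated over A = ℂ[z,z⁻¹]. If m₁,...,m_r ∈ M all satisfy σm_j = m_j and are linearly independent over ℂ, then they are linearly independent over A. Consequently dim_ℂ ker(σ−1 : M → M) ≤ rk_A(M). -/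
/-!
For a `σ`-fixed vector `x`, the twisting rule `σ (z • x) = q • z • σ x` puts `z ^ n • x` in the
`q ^ n`-eigenspace of `σ`. When `q` is not a root of unity these eigenvalues are pairwise distinct,
so eigenspace independence makes the family `z ^ n • m_j` linearly independent over `ℂ`; as the
`z ^ n` form a `ℂ`-basis of `ℂ[z, z⁻¹]`, this is linear independence of the `m_j` over
`ℂ[z, z⁻¹]`. Applied to a `ℂ`-basis of `ker (σ - 1)` it bounds the dimension by the rank.
-/

open LaurentPolynomial Function Module

theorem linearIndependent_of_smul_basis {R S M ι κ : Type*} [CommSemiring R] [Semiring S]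
    [Module R S] [AddCommMonoid M] [Module R M] [Module S M] [IsScalarTower R S M]
    (b : Basis κ R S) {v : ι → M} (h : LinearIndependent R fun p : ι × κ ↦ b p.2 • v p.1) :
    LinearIndependent S v := by
  rw [LinearIndependent, Finsupp.linearCombination_smul, ← b.coe_repr_symm] at h
  refine Injective.of_comp_right h ?_
  exact (Finsupp.mapRange_surjective _ (map_zero _) b.repr.symm.surjective).comp
    (Finsupp.curryLinearEquiv R).surjective

theorem iSupIndep.linearIndependent_prod {R V ι κ : Type*} [Ring R] [AddCommGroup V] [Module R V]
    {p : κ → Submodule R V} (hp : iSupIndep p) {v : ι × κ → V}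
    (hv : ∀ k, LinearIndependent R fun i ↦ v (i, k)) (hmem : ∀ i k, v (i, k) ∈ p k) :
    LinearIndependent R v := by
  have hspan : ∀ k, Submodule.span R (Set.range fun i ↦ v (i, k)) ≤ p k := fun k ↦
    Submodule.span_le.2 (Set.range_subset_iff.2 fun i ↦ hmem i k)
  have hsigma := linearIndependent_iUnion_finite (f := fun k i ↦ v (i, k)) hv fun k t _ hk ↦
    (hp k).mono (hspan k) (iSup₂_le fun k' hk' ↦ (hspan k').trans
      (le_iSup₂ (f := fun j (_ : j ≠ k) ↦ p j) k' (ne_of_mem_of_not_mem hk' hk)))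
  exact (linearIndependent_equiv' ((Equiv.sigmaEquivProd κ ι).trans (Equiv.prodComm _ _)) rfl).1
    hsigma

theorem zpow_injective_of_ne_one {G₀ : Type*} [GroupWithZero G₀] {q : G₀} (hq0 : q ≠ 0)
    (hq : ∀ n : ℤ, n ≠ 0 → q ^ n ≠ 1) : Injective (q ^ · : ℤ → G₀) := fun a b hab ↦ by
  by_contra hne
  refine hq (a - b) (sub_ne_zero.2 hne) ?_
  rw [zpow_sub₀ hq0, div_eq_one_iff_eq (zpow_ne_zero _ hq0)]
  exact hab

section Twisted

variable {K M : Type*} [Field K] [AddCommGroup M] [Module K M] [Module K[T;T⁻¹] M]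
  [IsScalarTower K K[T;T⁻¹] M] {q : K} {σ : M ≃ₗ[K] M}

theorem map_T_smul (hσ : ∀ x : M, σ ((T 1 : K[T;T⁻¹]) • x) = q • (T 1 : K[T;T⁻¹]) • σ x)
    (hq0 : q ≠ 0) (n : ℤ) (x : M) :
    σ ((T n : K[T;T⁻¹]) • x) = q ^ n • (T n : K[T;T⁻¹]) • σ x := by
  let P (n : ℤ) : Prop := ∀ x : M, σ ((T n : K[T;T⁻¹]) • x) = q ^ n • (T n : K[T;T⁻¹]) • σ x
  have hadd {a b : ℤ} (ha : P a) (hb : P b) : P (a + b) := fun x ↦ by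
    rw [T_add, mul_smul, ha, hb, smul_comm (T a : K[T;T⁻¹]) (q ^ b), smul_smul, ← mul_smul,
      ← T_add, zpow_add₀ hq0]
  have hneg {a : ℤ} (ha : P a) : P (-a) := fun x ↦ by
    have := ha ((T (-a) : K[T;T⁻¹]) • x)
    rw [← mul_smul, ← T_add, add_neg_cancel, T_zero, one_smul] at this
    rw [this, smul_comm (T (-a) : K[T;T⁻¹]) (q ^ a), smul_smul, ← mul_smul, ← T_add,
      neg_add_cancel, T_zero, one_smul, ← zpow_add₀ hq0, neg_add_cancel, zpow_zero, one_smul]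
  have hone : P 1 := fun x ↦ by simpa using hσ x
  have hnat (k : ℕ) : P k := by
    induction k with
    | zero => intro x; simp
    | succ k ih => exact_mod_cast hadd ih hone
  obtain ⟨k, rfl | rfl⟩ := Int.eq_nat_or_neg n
  exacts [hnat k x, hneg (hnat k) x]

theorem T_smul_mem_eigenspace
    (hσ : ∀ x : M, σ ((T 1 : K[T;T⁻¹]) • x) = q • (T 1 : K[T;T⁻¹]) • σ x) (hq0 : q ≠ 0)
    {x : M} (hx : σ x = x) (n : ℤ) :
    (T n : K[T;T⁻¹]) • x ∈ End.eigenspace (σ : End K M) (q ^ n) := by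
  rw [End.mem_eigenspace_iff, LinearEquiv.coe_coe, map_T_smul hσ hq0, hx]

theorem linearIndependent_T_smul_of_fixed
    (hσ : ∀ x : M, σ ((T 1 : K[T;T⁻¹]) • x) = q • (T 1 : K[T;T⁻¹]) • σ x) (hq0 : q ≠ 0)
    (hq : ∀ n : ℤ, n ≠ 0 → q ^ n ≠ 1) {ι : Type*} {m : ι → M} (hfix : ∀ j, σ (m j) = m j)
    (hli : LinearIndependent K m) :
    LinearIndependent K fun p : ι × ℤ ↦ (T p.2 : K[T;T⁻¹]) • m p.1 := by
  have hindep : iSupIndep fun n : ℤ ↦ End.eigenspace (σ : End K M) (q ^ n) :=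
    (End.eigenspaces_iSupIndep (σ : End K M)).comp (zpow_injective_of_ne_one hq0 hq)
  refine hindep.linearIndependent_prod (fun n ↦ ?_) fun j n ↦
    T_smul_mem_eigenspace hσ hq0 (hfix j) n
  exact hli.map' (DistribSMul.toLinearMap K M (T n : K[T;T⁻¹]))
    (LinearMap.ker_eq_bot.2 fun x y h ↦ (isUnit_T n).smul_left_cancel.1 h)

theorem linearIndependent_laurent_of_fixed
    (hσ : ∀ x : M, σ ((T 1 : K[T;T⁻¹]) • x) = q • (T 1 : K[T;T⁻¹]) • σ x)
    (hq : ∀ n : ℤ, n ≠ 0 → q ^ n ≠ 1) {ι : Type*} {m : ι → M} (hfix : ∀ j, σ (m j) = m j)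
    (hli : LinearIndependent K m) : LinearIndependent K[T;T⁻¹] m := by
  rcases eq_or_ne q 0 with rfl | hq0
  -- `hq` admits `q = 0` (as `0 ^ n = 0` for all `n ≠ 0`), but then `z` acts by zero and `M = 0`.
  · have : Subsingleton M := subsingleton_of_forall_eq 0 fun x ↦ by
      have hTx : σ ((T 1 : K[T;T⁻¹]) • x) = 0 := by rw [hσ, zero_smul]
      rwa [σ.map_eq_zero_iff, (isUnit_T 1).smul_eq_zero] at hTx
    have : IsEmpty ι := ⟨fun j ↦ hli.ne_zero j (Subsingleton.elim _ _)⟩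
    exact linearIndependent_empty_type
  · exact linearIndependent_of_smul_basis (AddMonoidAlgebra.basis ℤ K)
      (linearIndependent_T_smul_of_fixed hσ hq0 hq hfix hli)

theorem rank_ker_sub_id_le_rank_laurent
    (hσ : ∀ x : M, σ ((T 1 : K[T;T⁻¹]) • x) = q • (T 1 : K[T;T⁻¹]) • σ x)
    (hq : ∀ n : ℤ, n ≠ 0 → q ^ n ≠ 1) :
    Module.rank K (LinearMap.ker ((σ : M →ₗ[K] M) - LinearMap.id)) ≤ Module.rank K[T;T⁻¹] M := by
  set F := LinearMap.ker ((σ : M →ₗ[K] M) - LinearMap.id)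
  let b := Free.chooseBasis K F
  rw [Free.rank_eq_card_chooseBasisIndex]
  refine LinearIndependent.cardinal_le_rank (v := fun i ↦ (b i : M)) ?_
  refine linearIndependent_laurent_of_fixed hσ hq (fun i ↦ ?_)
    (b.linearIndependent.map' F.subtype F.ker_subtype)
  have hbi := (b i).2
  rwa [LinearMap.mem_ker, LinearMap.sub_apply, sub_eq_zero] at hbi

end Twisted

theorem stmt_10_general (q : ℂ) (hq : ∀ n : ℤ, n ≠ 0 → q ^ n ≠ 1)
    (M : Type*) [AddCommGroup M] [Module ℂ M] [Module (LaurentPolynomial ℂ) M]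
    [IsScalarTower ℂ (LaurentPolynomial ℂ) M]
    (σ : M ≃ₗ[ℂ] M)
    (hσ : ∀ m : M, σ ((T 1 : LaurentPolynomial ℂ) • m) = q • ((T 1 : LaurentPolynomial ℂ) • σ m))
    (r : ℕ) (m : Fin r → M) (hfix : ∀ j, σ (m j) = m j) :
    (LinearIndependent ℂ m → LinearIndependent (LaurentPolynomial ℂ) m) ∧
      Module.rank ℂ (LinearMap.ker (σ.toLinearMap - (LinearMap.id : M →ₗ[ℂ] M))) ≤
        Module.rank (LaurentPolynomial ℂ) M :=
  ⟨linearIndependent_laurent_of_fixed hσ hq hfix, rank_ker_sub_id_le_rank_laurent hσ hq⟩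

/-- Let `q ∈ ℂ*` not be a root of unity and let `M` be an `A_q`-module
(encoded as an `A = ℂ[z,z⁻¹]`-module with a `ℂ`-linear automorphism `σ` satisfying
`σ(z·m) = q·z·σ(m)`) finitely generated over `A`.  If `m₁,…,m_r ∈ M` all satisfy
`σ(m_j) = m_j` and are linearly independent over `ℂ`, then they are linearly independent over
`A`.  Consequently `dim_ℂ ker(σ−1 : M → M) ≤ rk_A(M)`. -/
theorem stmt_10 (q : ℂ) (hq : ∀ n : ℤ, n ≠ 0 → q ^ n ≠ 1)
    (M : Type*) [AddCommGroup M] [Module ℂ M] [Module (LaurentPolynomial ℂ) M]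
    [IsScalarTower ℂ (LaurentPolynomial ℂ) M] [Module.Finite (LaurentPolynomial ℂ) M]
    (σ : M ≃ₗ[ℂ] M)
    (hσ : ∀ m : M, σ ((T 1 : LaurentPolynomial ℂ) • m) = q • ((T 1 : LaurentPolynomial ℂ) • σ m))
    (r : ℕ) (m : Fin r → M) (hfix : ∀ j, σ (m j) = m j) :
    (LinearIndependent ℂ m → LinearIndependent (LaurentPolynomial ℂ) m) ∧
      Module.rank ℂ (LinearMap.ker (σ.toLinearMap - (LinearMap.id : M →ₗ[ℂ] M))) ≤
        Module.rank (LaurentPolynomial ℂ) M :=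
  stmt_10_general q hq M σ hσ r m hfix
end

section
/- Let q ∈ ℂ* not be a root of unity and let L₁, L₂ be line bundle A_q-modules: L_i has underlying A-module A = ℂ[z,z⁻¹] with σ acting by σ(f(z)) = c_i z^{d_i} f(qz), c_i ∈ ℂ*, d_i ∈ ℤ. Then L₁ ≅ L₂ as A_q-modules if and only if d₁ = d₂ and c₁/c₂ ∈ q^ℤ. Consequently the group of isomorphism classes of line bundles under ⊗_A is isomorphic to (ℂ*/q^ℤ) × ℤ. -/
/-!
An `A`-linear automorphism `φ` of `A = K[T;T⁻¹]` is multiplication by the unit `u = φ 1`, and the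
units of `A` are the monomials `a T^k`. Intertwining `σ₁` and `σ₂` evaluated at `1` says
`c₁ T^{d₁} u = σ₂ u`, i.e. `c₁ a T^{d₁+k} = c₂ q^k a T^{k+d₂}`, which forces `d₁ = d₂` and
`c₁ = q^k c₂`. Conversely, if `c₁ = q^n c₂` then multiplication by `T^n` intertwines the two
actions.
-/

open LaurentPolynomial

namespace LaurentPolynomial

theorem smul_T_eq_smul_T_iff {R : Type*} [Semiring R] {r s : R} {m n : ℤ} (hr : r ≠ 0) :
    r • (T m : R[T;T⁻¹]) = s • T n ↔ m = n ∧ r = s := by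
  refine ⟨fun h => ?_, fun ⟨hmn, hrs⟩ => hmn ▸ hrs ▸ rfl⟩
  have hm := congrArg (fun f : R[T;T⁻¹] => f.coeff m) h
  simp only [AddMonoidAlgebra.coeff_smul, Finsupp.smul_apply, T_apply, smul_eq_mul, mul_ite,
    mul_one, mul_zero, if_true] at hm
  split_ifs at hm with hnm
  · exact ⟨hnm.symm, hm⟩
  · exact absurd hm hr

theorem exists_C_mul_T_of_isUnit {R : Type*} [CommRing R] [IsDomain R] {f : R[T;T⁻¹]}
    (hf : IsUnit f) : ∃ (a : R) (n : ℤ), IsUnit a ∧ f = C a * T n := by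
  obtain ⟨g, hfg⟩ := hf.exists_right_inv
  obtain ⟨m, p, hp⟩ := f.exists_T_pow
  obtain ⟨k, r, hr⟩ := g.exists_T_pow
  have hpr : p * r = Polynomial.X ^ (m + k) := by
    apply Polynomial.toLaurent_injective
    rw [map_mul, hp, hr, Polynomial.toLaurent_X_pow, Nat.cast_add, T_add,
      mul_mul_mul_comm, hfg, one_mul]
  obtain ⟨i, -, u, hu⟩ := (dvd_prime_pow Polynomial.prime_X _).1 (Dvd.intro r hpr)
  obtain ⟨a, ha, hCa⟩ := Polynomial.isUnit_iff.1 (u⁻¹).isUnit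
  refine ⟨a, i - m, ha, ?_⟩
  have hp' : p = Polynomial.C a * Polynomial.X ^ i := by
    rw [hCa, ← hu, mul_comm, Units.mul_inv_cancel_right]
  rw [T_sub, ← mul_assoc, ← Polynomial.toLaurent_C_mul_X_pow, ← hp', hp, mul_T_assoc,
    add_neg_cancel, T_zero, mul_one]

section Intertwining

variable {K : Type*} [Field K] {q c₁ c₂ : K} {σ₁ σ₂ : K[T;T⁻¹] →ₗ[K] K[T;T⁻¹]}

theorem eq_and_exists_zpow_of_linearEquiv_intertwining {d₁ d₂ : ℤ} (hc₁ : c₁ ≠ 0)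
    (hσ₁ : ∀ n : ℤ, σ₁ (T n) = (c₁ * q ^ n) • (T (n + d₁) : K[T;T⁻¹]))
    (hσ₂ : ∀ n : ℤ, σ₂ (T n) = (c₂ * q ^ n) • (T (n + d₂) : K[T;T⁻¹]))
    (φ : K[T;T⁻¹] ≃ₗ[K[T;T⁻¹]] K[T;T⁻¹]) (hφ : ∀ f, φ (σ₁ f) = σ₂ (φ f)) :
    d₁ = d₂ ∧ ∃ n : ℤ, c₁ = q ^ n * c₂ := by
  have hφ_mul (f : K[T;T⁻¹]) : φ f = f * φ 1 := by
    rw [← smul_eq_mul, ← map_smul, smul_eq_mul, mul_one]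
  have hunit : IsUnit (φ 1) :=
    IsUnit.of_mul_eq_one_right (φ.symm 1) (by rw [← hφ_mul, φ.apply_symm_apply])
  obtain ⟨a, k, ha, hg⟩ := exists_C_mul_T_of_isUnit hunit
  have h := hφ (T 0)
  rw [hφ_mul, T_zero, hg, ← T_zero, hσ₁, ← smul_eq_C_mul, map_smul, hσ₂, smul_smul, mul_smul_comm,
    smul_mul_assoc, smul_smul, ← T_add, zpow_zero, mul_one, zero_add] at h
  obtain ⟨hd, hc⟩ := (smul_T_eq_smul_T_iff (mul_ne_zero ha.ne_zero hc₁)).1 h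
  exact ⟨by omega, k, mul_left_cancel₀ ha.ne_zero (by linear_combination hc)⟩

variable {d : ℤ}

theorem T_mul_map_eq_map_T_mul {n : ℤ} (hc : ∀ m : ℤ, c₁ * q ^ m = c₂ * q ^ (n + m))
    (hσ₁ : ∀ m : ℤ, σ₁ (T m) = (c₁ * q ^ m) • (T (m + d) : K[T;T⁻¹]))
    (hσ₂ : ∀ m : ℤ, σ₂ (T m) = (c₂ * q ^ m) • (T (m + d) : K[T;T⁻¹])) (f : K[T;T⁻¹]) :
    T n * σ₁ f = σ₂ (T n * f) := by
  induction f using LaurentPolynomial.induction_on' with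
  | add f g hf hg => rw [map_add, mul_add, hf, hg, mul_add, map_add]
  | C_mul_T m a =>
    rw [← smul_eq_C_mul, map_smul, mul_smul_comm, mul_smul_comm, map_smul, hσ₁, ← T_add, hσ₂,
      mul_smul_comm, ← T_add, hc, add_assoc]

theorem exists_linearEquiv_intertwining (hc₁ : c₁ ≠ 0)
    (hσ₁ : ∀ m : ℤ, σ₁ (T m) = (c₁ * q ^ m) • (T (m + d) : K[T;T⁻¹]))
    (hσ₂ : ∀ m : ℤ, σ₂ (T m) = (c₂ * q ^ m) • (T (m + d) : K[T;T⁻¹]))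
    {n : ℤ} (hc : c₁ = q ^ n * c₂) :
    ∃ φ : K[T;T⁻¹] ≃ₗ[K[T;T⁻¹]] K[T;T⁻¹], ∀ f, φ (σ₁ f) = σ₂ (φ f) := by
  -- `zpow_add₀` fails at `q = 0`; there `c₁ ≠ 0` forces `n = 0`.
  have hq : q ≠ 0 ∨ n = 0 := by
    by_contra! h
    rw [h.1, zero_zpow n h.2, zero_mul] at hc
    exact hc₁ hc
  refine ⟨LinearEquiv.smulOfUnit (isUnit_T n).unit, T_mul_map_eq_map_T_mul (fun m => ?_) hσ₁ hσ₂⟩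
  rcases hq with hq | rfl
  · rw [hc, zpow_add₀ hq]; ring
  · rw [hc, zpow_zero, zero_add, one_mul]

end Intertwining

end LaurentPolynomial

theorem stmt_12_general (q : ℂ)
    (c₁ c₂ : ℂ) (hc₁ : c₁ ≠ 0) (d₁ d₂ : ℤ)
    (σ₁ σ₂ : LaurentPolynomial ℂ →ₗ[ℂ] LaurentPolynomial ℂ)
    (hσ₁ : ∀ n : ℤ, σ₁ (T n) = (c₁ * q ^ n) • (T (n + d₁) : LaurentPolynomial ℂ))
    (hσ₂ : ∀ n : ℤ, σ₂ (T n) = (c₂ * q ^ n) • (T (n + d₂) : LaurentPolynomial ℂ)) :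
    (∃ φ : LaurentPolynomial ℂ ≃ₗ[LaurentPolynomial ℂ] LaurentPolynomial ℂ,
        ∀ f : LaurentPolynomial ℂ, φ (σ₁ f) = σ₂ (φ f)) ↔
      d₁ = d₂ ∧ ∃ n : ℤ, c₁ = q ^ n * c₂ := by
  constructor
  · rintro ⟨φ, hφ⟩
    exact eq_and_exists_zpow_of_linearEquiv_intertwining hc₁ hσ₁ hσ₂ φ hφ
  · rintro ⟨rfl, n, hc⟩
    exact exists_linearEquiv_intertwining hc₁ hσ₁ hσ₂ hc

/-- Let `q ∈ ℂ*` not be a root of unity and let `L₁, L₂` be line bundle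
`A_q`-modules: `Lᵢ` has underlying `A`-module `A = ℂ[z,z⁻¹]` with `σ` acting by
`σᵢ(f(z)) = cᵢ z^{dᵢ} f(qz)` (so `σᵢ(zⁿ) = cᵢ qⁿ z^{n+dᵢ}`), `cᵢ ∈ ℂ*`, `dᵢ ∈ ℤ`.
Then `L₁ ≅ L₂` as `A_q`-modules (an `A`-linear automorphism of `A` intertwining `σ₁` and `σ₂`)
if and only if `d₁ = d₂` and `c₁/c₂ ∈ q^ℤ`.  (Hence the group of isomorphism classes of line
bundles is `(ℂ*/q^ℤ) × ℤ`.) -/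
theorem stmt_12 (q : ℂ) (hq : ∀ n : ℤ, n ≠ 0 → q ^ n ≠ 1)
    (c₁ c₂ : ℂ) (hc₁ : c₁ ≠ 0) (hc₂ : c₂ ≠ 0) (d₁ d₂ : ℤ)
    (σ₁ σ₂ : LaurentPolynomial ℂ →ₗ[ℂ] LaurentPolynomial ℂ)
    (hσ₁ : ∀ n : ℤ, σ₁ (T n) = (c₁ * q ^ n) • (T (n + d₁) : LaurentPolynomial ℂ))
    (hσ₂ : ∀ n : ℤ, σ₂ (T n) = (c₂ * q ^ n) • (T (n + d₂) : LaurentPolynomial ℂ)) :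
    (∃ φ : LaurentPolynomial ℂ ≃ₗ[LaurentPolynomial ℂ] LaurentPolynomial ℂ,
        ∀ f : LaurentPolynomial ℂ, φ (σ₁ f) = σ₂ (φ f)) ↔
      d₁ = d₂ ∧ ∃ n : ℤ, c₁ = q ^ n * c₂ :=
  stmt_12_general q c₁ c₂ hc₁ d₁ d₂ σ₁ σ₂ hσ₁ hσ₂
end

section
/- (Dual combinatorial partition identity) With the same setup: t ≥ 1, p₀,...,p_t ∈ R with p_t = 1, τ a ring automorphism of a commutative ring R, X_{t,s} and Π_x as before. Then for every s > 0: Σ_{i=0}^{t} p_{t−i}^{τ^i} · Σ_{x ∈ X_{t,s−i}} Π_x^{τ^i} = 0, where Π_x^{τ^i} means applying τ^i to Π_x. -/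
/-!
Splitting a tuple `x ∈ X_{t,s}` (for `s > 0`) into its first entry `i ∈ [1, min t s]` and the rest
`x' ∈ X_{t,s-i}` gives, by `Π_{i :: x'} = -τ^i(p_{t-i} Π_{x'})`, the recursion
`Σ_{X_{t,s}} Π = -Σ_{i=1}^{t} τ^i(p_{t-i}) τ^i(Σ_{X_{t,s-i}} Π)`.
Since `p_t = 1`, the left-hand side is exactly the `i = 0` term of the identity.
-/

noncomputable section

/-- `Π_x` for a tuple `x = (x₁,…,x_k)` (given as a list), namely
`Π_x = (−1)^k ∏_{j=1}^k τ^{x₁+⋯+x_j}(p_{t−x_j})`, defined by the recursion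
`Π_[] = 1`, `Π_{a::l} = −τ^a (p_{t−a} · Π_l)`. -/
def piProd {R : Type*} [CommRing R] (τ : R ≃+* R) (p : ℕ → R) (t : ℕ) : List ℕ → R
  | [] => 1
  | a :: l => -((τ ^ a) (p (t - a) * piProd τ p t l))

/-- `Σ_{x ∈ X_{t,s}} Π_x`, where `X_{t,s}` is the set of tuples of integers in `[1,t]`
summing to `s` (encoded as compositions of `s` all of whose parts are `≤ t`). -/
def innerSum {R : Type*} [CommRing R] (τ : R ≃+* R) (p : ℕ → R) (t s : ℕ) : R :=
  ∑ x ∈ Finset.univ.filter (fun x : Composition s => ∀ a ∈ x.blocks, a ≤ t),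
    piProd τ p t x.blocks

open Finset

namespace Composition

variable {s : ℕ}

def consSub {i : ℕ} (hi : 0 < i) (his : i ≤ s) (c : Composition (s - i)) : Composition s where
  blocks := i :: c.blocks
  blocks_pos h := (List.mem_cons.1 h).elim (· ▸ hi) c.blocks_pos
  blocks_sum := by rw [List.sum_cons, c.blocks_sum]; omega

def tail (c : Composition s) : Composition (s - c.blocks.headI) where
  blocks := c.blocks.tail
  blocks_pos h := c.blocks_pos (List.mem_of_mem_tail h)
  blocks_sum := by
    have hsum := c.blocks_sum
    cases h : c.blocks with
    | nil => simp [h] at hsum ⊢; omega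
    | cons a l => rw [h, List.sum_cons] at hsum; simp; omega

lemma headI_cons_tail_blocks (hs : 0 < s) (c : Composition s) :
    c.blocks.headI :: c.tail.blocks = c.blocks := by
  change c.blocks.headI :: c.blocks.tail = c.blocks
  cases h : c.blocks with
  | nil => exact absurd h (List.ne_nil_of_length_pos (c.length_pos_of_pos hs))
  | cons a l => rfl

lemma headI_mem_blocks (hs : 0 < s) (c : Composition s) : c.blocks.headI ∈ c.blocks := by
  rw [← headI_cons_tail_blocks hs c]
  exact List.mem_cons_self

lemma headI_le (hs : 0 < s) (c : Composition s) : c.blocks.headI ≤ s := by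
  simpa only [c.blocks_sum] using List.le_sum_of_mem (headI_mem_blocks hs c)

end Composition

def boundedCompositions (t s : ℕ) : Finset (Composition s) :=
  univ.filter fun c => ∀ a ∈ c.blocks, a ≤ t

lemma innerSum_eq_sum_boundedCompositions {R : Type*} [CommRing R] (τ : R ≃+* R) (p : ℕ → R)
    (t s : ℕ) : innerSum τ p t s = ∑ c ∈ boundedCompositions t s, piProd τ p t c.blocks :=
  rfl

lemma mem_boundedCompositions {t s : ℕ} {c : Composition s} :
    c ∈ boundedCompositions t s ↔ ∀ a ∈ c.blocks, a ≤ t := by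
  simp [boundedCompositions]

lemma sum_boundedCompositions_eq_sum_cons {M : Type*} [AddCommMonoid M] (f : List ℕ → M)
    {t s : ℕ} (hs : 0 < s) :
    ∑ c ∈ boundedCompositions t s, f c.blocks =
      ∑ i ∈ Icc 1 t with i ≤ s, ∑ c ∈ boundedCompositions t (s - i), f (i :: c.blocks) := by
  rw [sum_sigma']
  refine sum_bij' (fun c _ => ⟨c.blocks.headI, c.tail⟩)
    (fun x hx => Composition.consSub (i := x.1)
      (by simp only [mem_sigma, mem_filter, mem_Icc] at hx; omega)
      (by simp only [mem_sigma, mem_filter, mem_Icc] at hx; omega) x.2) ?_ ?_ ?_ ?_ ?_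
  · intro c hc
    rw [mem_boundedCompositions] at hc
    simp only [mem_sigma, mem_filter, mem_Icc, mem_boundedCompositions]
    refine ⟨⟨⟨c.blocks_pos (c.headI_mem_blocks hs), hc _ (c.headI_mem_blocks hs)⟩,
      c.headI_le hs⟩, fun a ha => hc a (List.mem_of_mem_tail ha)⟩
  · rintro ⟨i, c⟩ hx
    simp only [mem_sigma, mem_filter, mem_Icc, mem_boundedCompositions] at hx
    rw [mem_boundedCompositions]
    rintro a (_ | ⟨_, ha⟩)
    exacts [hx.1.1.2, hx.2 a ha]
  · intro c _
    exact Composition.ext (c.headI_cons_tail_blocks hs)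
  · rintro ⟨i, c⟩ _
    rfl
  · intro c _
    change f c.blocks = f (c.blocks.headI :: c.tail.blocks)
    rw [c.headI_cons_tail_blocks hs]

lemma innerSum_eq_neg_sum {R : Type*} [CommRing R] (τ : R ≃+* R) (p : ℕ → R) (t : ℕ) {s : ℕ}
    (hs : 0 < s) :
    innerSum τ p t s =
      -∑ i ∈ Icc 1 t, if i ≤ s then (τ ^ i) (p (t - i)) * (τ ^ i) (innerSum τ p t (s - i))
        else 0 := by
  rw [innerSum_eq_sum_boundedCompositions, sum_boundedCompositions_eq_sum_cons _ hs,
    ← sum_filter, ← sum_neg_distrib]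
  refine sum_congr rfl fun i _ => ?_
  simp only [piProd, innerSum_eq_sum_boundedCompositions, sum_neg_distrib, map_sum, map_mul,
    mul_sum]

theorem stmt_14_general {R : Type*} [CommRing R] (τ : R ≃+* R) (p : ℕ → R) (t : ℕ)
    (hp : p t = 1) (s : ℕ) (hs : 0 < s) :
    ∑ i ∈ Finset.range (t + 1),
      (if i ≤ s then (τ ^ i) (p (t - i)) * (τ ^ i) (innerSum τ p t (s - i)) else 0) = 0 := by
  rw [range_eq_Ico, sum_eq_sum_Ico_succ_bot (Nat.zero_lt_succ t), zero_add, Nat.succ_eq_add_one,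
    Ico_add_one_right_eq_Icc]
  simp only [zero_le, if_true, Nat.sub_zero, pow_zero, hp, map_one, one_mul]
  rw [innerSum_eq_neg_sum τ p t hs]
  exact neg_add_cancel _

/-- dual combinatorial partition identity.  With the same setup as in the
previous statement (`t ≥ 1`, `p_t = 1`, `τ` a ring automorphism of a commutative ring `R`):
for every `s > 0`, `Σ_{i=0}^{t} τ^i(p_{t−i}) · τ^i(Σ_{x ∈ X_{t,s−i}} Π_x) = 0`, with the
convention that the inner sum is `0` when `s − i < 0`. -/
theorem stmt_14 {R : Type*} [CommRing R] (τ : R ≃+* R) (p : ℕ → R) (t : ℕ) (ht : 1 ≤ t)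
    (hp : p t = 1) (s : ℕ) (hs : 0 < s) :
    ∑ i ∈ Finset.range (t + 1),
      (if i ≤ s then (τ ^ i) (p (t - i)) * (τ ^ i) (innerSum τ p t (s - i)) else 0) = 0 :=
  stmt_14_general τ p t hp s hs

end
end
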